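/- Let d ≥ 1 and let the Hermite heat kernel representation e^{-tH}f(x) = C_d (sinh 2t)^{-d/2} e^{-(tanh t/2)|x|²} ∫_{ℝ^d} e^{-|x-y|²/(2 sinh 2t)} e^{-(tanh t/2)|y|²} f(y) dy hold with constant C_d > 0. Let u₀(x) = α(−log|x|)^{1/p} 𝟙_{|x|<1} with α > 0, p > 1. Then there exists a constant C > 0 such that for all sufficiently small t > 0 and all x with √t/2 ≤ |x| ≤ √t, e^{-tH}u₀(x) ≥ C α (−log(4|x|))^{1/p}. -/

import Mathlib

/-!
Restrict the kernel integral to the ball `B_{|x|}(3x)`. There `2|x| ≤ |y| ≤ 4|x|` and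
`|x - y| ≤ 3|x|`, so for `|x|² ≤ t` both Gaussian factors are bounded below by absolute
constants (using `sinh 2t ≥ 2t` and `tanh t < 1`), while `u₀(y) ≥ α (-log (4|x|))^{1/p}`. The ball
has volume `|x|^d |B₁|`, and `|x|^d (sinh 2t)^{-d/2} = (|x|² / sinh 2t)^{d/2}` is bounded below
because `sinh 2t ≤ 2t cosh 1` and `|x|² ≥ t/4`. The lower bound on the integral over the whole
space needs `u₀ ∈ L¹`, which follows from `(-log r)^{1/p} ≲ r^{-1/2}` near `0`.
-/

open MeasureTheory Real ENNReal

/-- The singular initial data `u₀(x) = α(−log|x|)^{1/p}` for `|x| < 1`, zero otherwise. -/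
noncomputable def singularData {d : ℕ} (α p : ℝ)
    (x : EuclideanSpace ℝ (Fin d)) : ℝ :=
  if ‖x‖ < 1 then α * (-Real.log ‖x‖) ^ (1 / p) else 0

namespace Real

lemma sinh_le_mul_cosh {x : ℝ} (hx : 0 ≤ x) : sinh x ≤ x * cosh x := by
  refine hasSum_le (fun n ↦ ?_) (hasSum_sinh x) ((hasSum_cosh x).mul_left x)
  rw [pow_succ, mul_div_assoc', mul_comm x]
  gcongr
  omega

lemma sinh_two_mul_le {t : ℝ} (ht : 0 ≤ t) (ht₁ : 2 * t ≤ 1) :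
    sinh (2 * t) ≤ 2 * cosh 1 * t := by
  have hcosh : cosh (2 * t) ≤ cosh 1 := by
    rwa [cosh_le_cosh, abs_of_nonneg (by linarith), abs_one]
  nlinarith [sinh_le_mul_cosh (by linarith : 0 ≤ 2 * t)]

lemma tanh_nonneg {t : ℝ} (ht : 0 ≤ t) : 0 ≤ tanh t := by
  rw [tanh_eq_sinh_div_cosh]
  exact div_nonneg (sinh_nonneg_iff.mpr ht) (cosh_pos t).le

lemma exp_neg_half_le_exp_neg_tanh_mul_sq (t : ℝ) {r : ℝ} (hr : |r| ≤ 1) :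
    exp (-(1 / 2)) ≤ exp (-(tanh t / 2) * r ^ 2) := by
  have hr2 : r ^ 2 ≤ 1 := by rwa [sq_le_one_iff_abs_le_one]
  gcongr
  nlinarith [tanh_lt_one t, sq_nonneg r]

lemma neg_log_nonneg {r : ℝ} (hr₀ : 0 ≤ r) (hr₁ : r ≤ 1) : 0 ≤ -log r :=
  neg_nonneg.mpr (log_nonpos hr₀ hr₁)

lemma neg_log_rpow_le {p r : ℝ} (hp : 0 < p) (hr₀ : 0 < r) (hr₁ : r ≤ 1) :
    (-log r) ^ (1 / p) ≤ (2 / p) ^ (1 / p) * r ^ (-(1 / 2 : ℝ)) := by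
  have hlog : -log r ≤ 2 / p * r ^ (-(p / 2)) := by
    have := log_le_rpow_div (inv_nonneg.mpr hr₀.le) (half_pos hp)
    rw [log_inv, inv_rpow hr₀.le, ← rpow_neg hr₀.le] at this
    linarith [show r ^ (-(p / 2)) / (p / 2) = 2 / p * r ^ (-(p / 2)) by ring]
  calc (-log r) ^ (1 / p) ≤ (2 / p * r ^ (-(p / 2))) ^ (1 / p) :=
        rpow_le_rpow (neg_log_nonneg hr₀.le hr₁) hlog (by positivity)
    _ = (2 / p) ^ (1 / p) * r ^ (-(1 / 2 : ℝ)) := by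
        rw [mul_rpow (by positivity) (by positivity), ← rpow_mul hr₀.le]
        congr 2
        field_simp

lemma sq_div_rpow_half {r s : ℝ} (hr : 0 ≤ r) (hs : 0 ≤ s) (d : ℕ) :
    (r ^ 2 / s) ^ ((d : ℝ) / 2) = r ^ d * s ^ (-(d : ℝ) / 2) := by
  rw [div_rpow (by positivity) hs, neg_div, rpow_neg hs, div_eq_mul_inv, ← rpow_natCast_mul hr,
    show ((2 : ℕ) : ℝ) * (d / 2) = d by push_cast; ring, rpow_natCast]

end Real

lemma norm_bounds_of_mem_ball_three_smul {E : Type*} [NormedAddCommGroup E] [NormedSpace ℝ E]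
    {x y : E} (hy : y ∈ Metric.ball ((3 : ℝ) • x) ‖x‖) :
    2 * ‖x‖ ≤ ‖y‖ ∧ ‖y‖ ≤ 4 * ‖x‖ ∧ ‖x - y‖ ≤ 3 * ‖x‖ := by
  rw [Metric.mem_ball, dist_eq_norm] at hy
  have h3 : ‖(3 : ℝ) • x‖ = 3 * ‖x‖ := by rw [norm_smul]; norm_num
  have h2 : ‖x - (3 : ℝ) • x‖ = 2 * ‖x‖ := by
    rw [show x - (3 : ℝ) • x = (-2 : ℝ) • x by module, norm_smul]; norm_num
  refine ⟨?_, ?_, ?_⟩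
  · linarith [norm_sub_norm_le ((3 : ℝ) • x) y, norm_sub_rev y ((3 : ℝ) • x)]
  · linarith [norm_le_norm_add_norm_sub' y ((3 : ℝ) • x)]
  · linarith [norm_sub_le_norm_sub_add_norm_sub x ((3 : ℝ) • x) y, norm_sub_rev y ((3 : ℝ) • x)]

section singularData

variable {d : ℕ} {α p : ℝ}

lemma measurable_singularData : Measurable (singularData (d := d) α p) :=
  Measurable.ite (measurableSet_lt measurable_norm measurable_const)
    (measurable_const.mul (measurable_norm.log.neg.pow_const _)) measurable_const

lemma singularData_nonneg (hα : 0 ≤ α) (y : EuclideanSpace ℝ (Fin d)) :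
    0 ≤ singularData α p y := by
  unfold singularData
  split_ifs with hy
  · exact mul_nonneg hα (rpow_nonneg (neg_log_nonneg (norm_nonneg y) hy.le) _)
  · exact le_rfl

lemma le_singularData (hα : 0 ≤ α) (hp : 0 ≤ p) {y : EuclideanSpace ℝ (Fin d)} {r : ℝ}
    (hy : 0 < ‖y‖) (hyr : ‖y‖ ≤ r) (hr : r < 1) :
    α * (-Real.log r) ^ (1 / p) ≤ singularData α p y := by
  rw [singularData, if_pos (hyr.trans_lt hr)]
  gcongr
  exact neg_log_nonneg (hy.le.trans hyr) hr.le

lemma integrable_singularData (hd : 1 ≤ d) (hp : 0 < p) :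
    Integrable (singularData (d := d) α p) := by
  have hsupp : Function.support (singularData (d := d) α p) ⊆ Metric.ball 0 1 := by
    intro y hy
    by_contra hy'
    rw [mem_ball_zero_iff] at hy'
    exact hy (if_neg hy')
  rw [← integrableOn_iff_integrable_of_support_subset hsupp]
  have hd' : (1 : ℝ) ≤ d := Nat.one_le_cast.mpr hd
  refine integrableOn_ball_of_norm_le_rpow (C := |α| * (2 / p) ^ (1 / p)) (α := 1 / 2)
    (by rwa [finrank_euclideanSpace_fin]) (by rw [finrank_euclideanSpace_fin]; linarith) ?_
    measurable_singularData.aestronglyMeasurable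
  refine (ae_restrict_iff' measurableSet_ball).mpr (ae_of_all _ fun y hy => ?_)
  rw [mem_ball_zero_iff] at hy
  rw [singularData, if_pos hy, norm_mul, Real.norm_eq_abs, mul_assoc]
  gcongr
  rcases (norm_nonneg y).eq_or_lt with hy₀ | hy₀
  · rw [← hy₀]; simp [hp.ne']
  · rw [Real.norm_of_nonneg (rpow_nonneg (neg_log_nonneg hy₀.le hy.le) _)]
    exact neg_log_rpow_le hp hy₀ hy.le

end singularData

section kernel

variable {d : ℕ} {α p t : ℝ} {x : EuclideanSpace ℝ (Fin d)}

lemma integrable_kernel_mul_singularData (hd : 1 ≤ d) (hp : 0 < p) (ht : 0 < t) :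
    Integrable fun y : EuclideanSpace ℝ (Fin d) =>
      exp (-‖x - y‖ ^ 2 / (2 * sinh (2 * t))) * exp (-(tanh t / 2) * ‖y‖ ^ 2) *
        singularData α p y := by
  refine (integrable_singularData hd hp).bdd_mul (c := 1) (by fun_prop) (ae_of_all _ fun y => ?_)
  have hs : 0 < sinh (2 * t) := sinh_pos_iff.mpr (by linarith)
  rw [norm_mul, Real.norm_of_nonneg (exp_pos _).le, Real.norm_of_nonneg (exp_pos _).le,
    ← exp_add, exp_le_one_iff]
  have : 0 ≤ ‖x - y‖ ^ 2 / (2 * sinh (2 * t)) := by positivity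
  have : 0 ≤ tanh t / 2 * ‖y‖ ^ 2 := by have := tanh_nonneg ht.le; positivity
  rw [neg_div]
  linarith

lemma le_kernel_mul_singularData (hα : 0 ≤ α) (hp : 0 ≤ p) (ht : 0 < t) (hxt : ‖x‖ ^ 2 ≤ t)
    (hx : 4 * ‖x‖ < 1) {y : EuclideanSpace ℝ (Fin d)} (hy : y ∈ Metric.ball ((3 : ℝ) • x) ‖x‖) :
    exp (-(11 / 4)) * (α * (-Real.log (4 * ‖x‖)) ^ (1 / p)) ≤
      exp (-‖x - y‖ ^ 2 / (2 * sinh (2 * t))) * exp (-(tanh t / 2) * ‖y‖ ^ 2) *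
        singularData α p y := by
  obtain ⟨hy₂, hy₄, hxy⟩ := norm_bounds_of_mem_ball_three_smul hy
  have hx₀ : 0 < ‖x‖ := Metric.pos_of_mem_ball hy
  have hgauss : exp (-(9 / 4)) ≤ exp (-‖x - y‖ ^ 2 / (2 * sinh (2 * t))) := by
    have hs : 2 * t ≤ sinh (2 * t) := self_le_sinh_iff.mpr (by linarith)
    gcongr
    rw [neg_div, neg_le_neg_iff, div_le_iff₀ (by linarith)]
    nlinarith [norm_nonneg (x - y)]
  have hweight := exp_neg_half_le_exp_neg_tanh_mul_sq t (r := ‖y‖) (by rw [abs_norm]; linarith)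
  rw [show -(11 / 4 : ℝ) = -(9 / 4) + -(1 / 2) by norm_num, exp_add]
  gcongr
  · have := neg_log_nonneg (by positivity) hx.le
    positivity
  · exact le_singularData hα hp (by linarith) hy₄ hx

lemma le_integral_kernel_mul_singularData (hd : 1 ≤ d) (hα : 0 ≤ α) (hp : 0 < p) (ht : 0 < t)
    (hx₀ : 0 < ‖x‖) (hxt : ‖x‖ ^ 2 ≤ t) (hx : 4 * ‖x‖ < 1) :
    exp (-(11 / 4)) * (α * (-Real.log (4 * ‖x‖)) ^ (1 / p)) *
        (‖x‖ ^ d * volume.real (Metric.ball (0 : EuclideanSpace ℝ (Fin d)) 1)) ≤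
      ∫ y, exp (-‖x - y‖ ^ 2 / (2 * sinh (2 * t))) * exp (-(tanh t / 2) * ‖y‖ ^ 2) *
        singularData α p y := by
  have hint := integrable_kernel_mul_singularData (x := x) (α := α) hd hp ht
  have hvol : volume.real (Metric.ball ((3 : ℝ) • x) ‖x‖) =
      ‖x‖ ^ d * volume.real (Metric.ball (0 : EuclideanSpace ℝ (Fin d)) 1) := by
    rw [measureReal_def, measureReal_def, Measure.addHaar_ball_of_pos _ _ hx₀,
      toReal_mul, toReal_ofReal (by positivity), finrank_euclideanSpace_fin]
  calc _ = exp (-(11 / 4)) * (α * (-Real.log (4 * ‖x‖)) ^ (1 / p)) *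
        volume.real (Metric.ball ((3 : ℝ) • x) ‖x‖) := by rw [hvol]
    _ ≤ ∫ y in Metric.ball ((3 : ℝ) • x) ‖x‖, exp (-‖x - y‖ ^ 2 / (2 * sinh (2 * t))) *
          exp (-(tanh t / 2) * ‖y‖ ^ 2) * singularData α p y :=
        setIntegral_ge_of_const_le_real measurableSet_ball measure_ball_lt_top.ne
          (fun y hy => le_kernel_mul_singularData hα hp.le ht hxt hx hy) hint.integrableOn
    _ ≤ _ := setIntegral_le_integral hint (ae_of_all _ fun y => by
        have := singularData_nonneg (p := p) hα y; positivity)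

lemma le_kernel_representation_singularData (hd : 1 ≤ d) (hα : 0 ≤ α) (hp : 0 < p) (ht : 0 < t)
    (hx₀ : 0 < ‖x‖) (hxt : ‖x‖ ^ 2 ≤ t) (hx : 4 * ‖x‖ < 1) :
    exp (-(13 / 4)) * volume.real (Metric.ball (0 : EuclideanSpace ℝ (Fin d)) 1) *
        (α * (-Real.log (4 * ‖x‖)) ^ (1 / p)) * (‖x‖ ^ 2 / sinh (2 * t)) ^ ((d : ℝ) / 2) ≤
      sinh (2 * t) ^ (-(d : ℝ) / 2) * exp (-(tanh t / 2) * ‖x‖ ^ 2) *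
        ∫ y, exp (-‖x - y‖ ^ 2 / (2 * sinh (2 * t))) * exp (-(tanh t / 2) * ‖y‖ ^ 2) *
          singularData α p y := by
  have hs : 0 < sinh (2 * t) := sinh_pos_iff.mpr (by linarith)
  calc _ = sinh (2 * t) ^ (-(d : ℝ) / 2) * exp (-(1 / 2)) *
        (exp (-(11 / 4)) * (α * (-Real.log (4 * ‖x‖)) ^ (1 / p)) *
          (‖x‖ ^ d * volume.real (Metric.ball (0 : EuclideanSpace ℝ (Fin d)) 1))) := by
        rw [sq_div_rpow_half (norm_nonneg x) hs.le,
          show -(13 / 4 : ℝ) = -(1 / 2) + -(11 / 4) by norm_num, exp_add]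
        ring
    _ ≤ _ := by
        have := neg_log_nonneg (by positivity) hx.le
        gcongr _ * ?_ * ?_
        · exact exp_neg_half_le_exp_neg_tanh_mul_sq t (r := ‖x‖) (by rw [abs_norm]; linarith)
        · exact le_integral_kernel_mul_singularData hd hα hp ht hx₀ hxt hx

end kernel

theorem hermite_heat_lower_bound (d : ℕ) (hd : 1 ≤ d) (Cd α p : ℝ)
    (hCd : 0 < Cd) (hα : 0 < α) (hp : 1 < p)
    (E : ℝ → (EuclideanSpace ℝ (Fin d) → ℝ) → (EuclideanSpace ℝ (Fin d) → ℝ))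
    (hker : ∀ t : ℝ, 0 < t → ∀ f : EuclideanSpace ℝ (Fin d) → ℝ,
      ∀ x : EuclideanSpace ℝ (Fin d),
      E t f x = Cd * (Real.sinh (2 * t)) ^ (-(d : ℝ) / 2) *
        Real.exp (-(Real.tanh t / 2) * ‖x‖ ^ 2) *
        ∫ y : EuclideanSpace ℝ (Fin d),
          Real.exp (-‖x - y‖ ^ 2 / (2 * Real.sinh (2 * t))) *
            Real.exp (-(Real.tanh t / 2) * ‖y‖ ^ 2) * f y ∂volume) :
    ∃ C : ℝ, 0 < C ∧ ∃ t₀ : ℝ, 0 < t₀ ∧ ∀ t : ℝ, 0 < t → t < t₀ →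
      ∀ x : EuclideanSpace ℝ (Fin d),
        Real.sqrt t / 2 ≤ ‖x‖ → ‖x‖ ≤ Real.sqrt t →
          C * α * (-Real.log (4 * ‖x‖)) ^ (1 / p) ≤ E t (singularData α p) x := by
  set v := volume.real (Metric.ball (0 : EuclideanSpace ℝ (Fin d)) 1)
  have hv : 0 < v :=
    ENNReal.toReal_pos (Metric.measure_ball_pos volume 0 one_pos).ne' measure_ball_lt_top.ne
  refine ⟨Cd * exp (-(13 / 4)) * v * (1 / (8 * cosh 1)) ^ ((d : ℝ) / 2), by positivity,
    1 / 16, by norm_num, fun t ht ht₀ x hx₁ hx₂ => ?_⟩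
  have hx_sq : t / 4 ≤ ‖x‖ ^ 2 := by
    have := pow_le_pow_left₀ (by positivity) hx₁ 2
    rwa [div_pow, sq_sqrt ht.le, show (2 : ℝ) ^ 2 = 4 by norm_num] at this
  have hxt : ‖x‖ ^ 2 ≤ t := (le_sqrt (norm_nonneg x) ht.le).mp hx₂
  have hx₀ : 0 < ‖x‖ := by nlinarith
  have hx : 4 * ‖x‖ < 1 := by nlinarith
  have hratio : 1 / (8 * cosh 1) ≤ ‖x‖ ^ 2 / sinh (2 * t) := by
    rw [div_le_div_iff₀ (by positivity) (sinh_pos_iff.mpr (by linarith))]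
    nlinarith [sinh_two_mul_le ht.le (by linarith), cosh_pos 1]
  have := neg_log_nonneg (by positivity) hx.le
  rw [hker t ht]
  calc _ = Cd * (exp (-(13 / 4)) * v * (α * (-Real.log (4 * ‖x‖)) ^ (1 / p)) *
        (1 / (8 * cosh 1)) ^ ((d : ℝ) / 2)) := by ring
    _ ≤ Cd * (exp (-(13 / 4)) * v * (α * (-Real.log (4 * ‖x‖)) ^ (1 / p)) *
        (‖x‖ ^ 2 / sinh (2 * t)) ^ ((d : ℝ) / 2)) := by gcongr
    _ ≤ _ := by
        simpa only [mul_assoc] using mul_le_mul_of_nonneg_left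
          (le_kernel_representation_singularData hd hα.le (by linarith) ht hx₀ hxt hx) hCd.le
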